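/- Every Segal simplicial set is 2-Segal. -/

import Mathlib

open CategoryTheory Simplicial

universe u

namespace Seg

/-- Restriction of a simplex along a monotone map of standard simplices. -/
def res (X : SSet.{u}) {m n : ℕ} (f : Fin (m + 1) →o Fin (n + 1)) : X _⦋n⦌ → X _⦋m⦌ :=
  X.map (SimplexCategory.mkHom f).op

/-- The monotone injection `[l] → [n]`, `k ↦ i + k`, i.e. the inclusion of the
interval `{i, i+1, …, i+l}` into `{0, …, n}`. -/
def interval {n : ℕ} (i l : ℕ) (h : i + l ≤ n) : Fin (l + 1) →o Fin (n + 1) where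
  toFun k := ⟨i + k.1, by have := k.isLt; omega⟩
  monotone' := by
    intro a b hab
    have h' : a.1 ≤ b.1 := hab
    simp only [Fin.mk_le_mk]
    omega

/-- The monotone injection with image `{0,…,i} ∪ {j,…,n}` (where `i < j ≤ n`). -/
def outer {n : ℕ} (i j : ℕ) (hij : i < j) (hj : j ≤ n) :
    Fin (n - (j - i) + 2) →o Fin (n + 1) where
  toFun k := ⟨if k.1 ≤ i then k.1 else k.1 + (j - i) - 1, by have := k.isLt; split <;> omega⟩
  monotone' := by
    intro a b hab
    have h' : a.1 ≤ b.1 := hab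
    have ha := a.isLt
    have hb := b.isLt
    simp only [Fin.mk_le_mk]
    split_ifs <;> omega

/-- The monotone map `[1] → [l]` sending `0 ↦ 0` and `1 ↦ l`. -/
def ends (l : ℕ) : Fin 2 →o Fin (l + 1) where
  toFun k := ⟨k.1 * l, by
    have hk : k.1 ≤ 1 := Nat.lt_succ_iff.mp k.isLt
    have h2 : k.1 * l ≤ 1 * l := Nat.mul_le_mul hk (le_refl l)
    omega⟩
  monotone' := by
    intro a b hab
    have h' : a.1 ≤ b.1 := hab
    simp only [Fin.mk_le_mk]
    exact Nat.mul_le_mul h' (le_refl l)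

/-- The map `[0] → [n]` picking out the vertex `i`. -/
def vert {n : ℕ} (i : ℕ) (h : i ≤ n) : Fin 1 →o Fin (n + 1) where
  toFun _ := ⟨i, by omega⟩
  monotone' := fun _ _ _ => le_refl _

/-- The monotone surjection `[m+1] → [m]` hitting `i` twice; restriction along it is the
degeneracy `s_i : X_m → X_{m+1}`. -/
def degen {m : ℕ} (i : ℕ) (h : i ≤ m) : Fin (m + 2) →o Fin (m + 1) where
  toFun k := ⟨if k.1 ≤ i then k.1 else k.1 - 1, by have := k.isLt; split <;> omega⟩
  monotone' := by
    intro a b hab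
    have h' : a.1 ≤ b.1 := hab
    simp only [Fin.mk_le_mk]
    split_ifs <;> omega

/-- The 2-Segal map associated to `0 ≤ i < j ≤ n`, i.e. the canonical map
`X_n → X_{{0,…,i}∪{j,…,n}} ×_{X_{{i,j}}} X_{{i,…,j}}`, is a bijection.  (A map into a
fiber product of sets is a bijection iff every compatible pair has a unique preimage.) -/
def TwoSegalMapBij (X : SSet.{u}) (n i j : ℕ) (hij : i < j) (hj : j ≤ n) : Prop :=
  ∀ (a : X _⦋n - (j - i) + 1⦌) (b : X _⦋j - i⦌),
    res X (interval i 1 (by omega)) a = res X (ends (j - i)) b →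
    ∃! x : X _⦋n⦌,
      res X (outer i j hij hj) x = a ∧ res X (interval i (j - i) (by omega)) x = b

/-- A simplicial set is 2-Segal if all the 2-Segal maps are bijections. -/
def IsTwoSegal (X : SSet.{u}) : Prop :=
  ∀ (n i j : ℕ), 3 ≤ n → ∀ (hij : i < j) (hj : j ≤ n), TwoSegalMapBij X n i j hij hj

/-- A simplicial set is Segal (1-Segal) if for each `n ≥ 2` the map
`X_n → X_1 ×_{X_0} ⋯ ×_{X_0} X_1` (restriction to the edges `{k,k+1}`) is a bijection. -/
def IsSegal (X : SSet.{u}) : Prop :=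
  ∀ (n : ℕ), 2 ≤ n → ∀ e : Fin n → X _⦋1⦌,
    (∀ (k : ℕ) (hk : k + 1 < n),
      res X (vert 1 (le_refl 1)) (e ⟨k, by omega⟩) =
        res X (vert 0 (Nat.zero_le 1)) (e ⟨k + 1, hk⟩)) →
    ∃! x : X _⦋n⦌, ∀ k : Fin n, res X (interval k.1 1 (by have := k.isLt; omega)) x = e k

end Seg

/-!
A simplex of a Segal simplicial set is determined by its spine, and every compatible chain of
edges is a spine. Each edge `{k, k+1}` of `[n]` lies in `{0,…,i} ∪ {j,…,n}` or in `{i,…,j}`, so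
a pair `(a, b)` in the fibre product prescribes the spine of its only possible preimage. That
the chain is compatible at the seams `i` and `j`, and that the preimage has the right edge
`{i, j}`, the one edge of the outer face not on the spine, both come from `a` and `b` agreeing
on `{i, j}`.
-/

namespace Seg

variable {X : SSet.{u}}

lemma res_res {l m n : ℕ} (f : Fin (m + 1) →o Fin (n + 1)) (g : Fin (l + 1) →o Fin (m + 1))
    (x : X _⦋n⦌) : res X g (res X f x) = res X (f.comp g) x := by
  simp only [res, ← Functor.map_comp_apply, ← op_comp]
  rfl

lemma res_congr {m n : ℕ} {f g : Fin (m + 1) →o Fin (n + 1)} (hfg : ∀ k, (f k : ℕ) = g k)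
    (x : X _⦋n⦌) : res X f x = res X g x := by
  rw [show f = g from OrderHom.ext _ _ (funext fun k => Fin.ext (hfg k))]

lemma res_res_of_apply {l m n : ℕ} {f : Fin (m + 1) →o Fin (n + 1)}
    {g : Fin (l + 1) →o Fin (m + 1)} {h : Fin (l + 1) →o Fin (n + 1)}
    (hfg : ∀ q, (f (g q) : ℕ) = h q) (x : X _⦋n⦌) : res X g (res X f x) = res X h x :=
  (res_res f g x).trans (res_congr hfg x)

lemma res_of_apply_eq_self {m : ℕ} {f : Fin (m + 1) →o Fin (m + 1)} (hf : ∀ k, (f k : ℕ) = k)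
    (x : X _⦋m⦌) : res X f x = x := by
  have hid : SimplexCategory.mkHom f = 𝟙 _ := by
    ext k
    exact hf k
  rw [res, hid, op_id, X.map_id]
  rfl

lemma res_interval_congr {n i i' l : ℕ} (hi : i = i') (h : i + l ≤ n) (h' : i' + l ≤ n)
    (x : X _⦋n⦌) : res X (interval i l h) x = res X (interval i' l h') x := by
  subst hi
  rfl

lemma res_vert_res_eq {l m n p q : ℕ} (f : Fin (l + 1) →o Fin (n + 1))
    (g : Fin (m + 1) →o Fin (n + 1)) (hp : p ≤ l) (hq : q ≤ m)
    (hfg : (f ⟨p, by omega⟩ : ℕ) = g ⟨q, by omega⟩) (x : X _⦋n⦌) :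
    res X (vert p hp) (res X f x) = res X (vert q hq) (res X g x) := by
  rw [res_res, res_res]
  exact res_congr (fun _ => hfg) x

lemma res_interval_res_interval {n i l m : ℕ} (k : ℕ) (hl : i + l ≤ n) (hm : m + 1 ≤ l)
    (hk : i + m = k) (y : X _⦋n⦌) :
    res X (interval m 1 hm) (res X (interval i l hl) y) = res X (interval k 1 (by omega)) y :=
  res_res_of_apply (fun q => by simp [interval, DFunLike.coe]; omega) y

theorem IsSegal.ext (h : IsSegal X) {m : ℕ} (hm : 1 ≤ m) {x y : X _⦋m⦌}
    (he : ∀ k (hk : k + 1 ≤ m), res X (interval k 1 hk) x = res X (interval k 1 hk) y) :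
    x = y := by
  rcases Nat.lt_or_ge m 2 with hm2 | hm2
  · obtain rfl : m = 1 := by omega
    simpa only [res_of_apply_eq_self (f := interval 0 1 le_rfl) (fun k => by simp [interval])]
      using he 0 le_rfl
  · obtain ⟨z, -, hz⟩ := h m hm2 (fun k => res X (interval k.1 1 (by omega)) x)
      (fun k hk => res_vert_res_eq _ _ _ _ (by rfl) x)
    exact (hz x fun _ => rfl).trans (hz y fun k => (he k.1 _).symm).symm

section Outer

variable {n i j : ℕ} (hij : i < j) (hj : j ≤ n) (y : X _⦋n⦌)
include hij hj

lemma res_interval_res_outer_of_lt {m : ℕ} (hm : m < i) :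
    res X (interval m 1 (by omega)) (res X (outer i j hij hj) y) =
      res X (interval m 1 (by omega)) y :=
  res_res_of_apply (fun q => by simp only [interval, outer, DFunLike.coe]; split <;> omega) y

lemma res_interval_res_outer_of_gt {m : ℕ} (k : ℕ) (hm : i < m) (hmn : m + 1 ≤ n - (j - i) + 1)
    (hk : m + (j - i) - 1 = k) :
    res X (interval m 1 hmn) (res X (outer i j hij hj) y) = res X (interval k 1 (by omega)) y :=
  res_res_of_apply (fun q => by simp only [interval, outer, DFunLike.coe]; split <;> omega) y

lemma res_interval_res_outer_self :
    res X (interval i 1 (by omega)) (res X (outer i j hij hj) y) =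
      res X (ends (j - i)) (res X (interval i (j - i) (by omega)) y) := by
  rw [res_res_of_apply (h := (interval i (j - i) (by omega)).comp (ends (j - i))), res_res]
  rintro ⟨_ | _ | _, hq⟩
  all_goals simp [interval, outer, ends, DFunLike.coe, OrderHom.comp]
  all_goals omega

end Outer

section Glue

variable {n i j : ℕ} (hj : j ≤ n) (a : X _⦋n - (j - i) + 1⦌) (b : X _⦋j - i⦌)

def glueSpine (k : Fin n) : X _⦋1⦌ :=
  if hki : k.1 < i then res X (interval k 1 (by have := k.isLt; omega)) a
  else if hkj : k.1 < j then res X (interval (k - i) 1 (by omega)) b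
  else res X (interval (k - (j - i) + 1) 1 (by have := k.isLt; omega)) a

lemma glueSpine_of_lt (k : Fin n) (hki : k.1 < i) :
    glueSpine hj a b k = res X (interval k 1 (by have := k.isLt; omega)) a :=
  dif_pos hki

lemma glueSpine_of_mem (k : Fin n) (hik : i ≤ k.1) (hkj : k.1 < j) :
    glueSpine hj a b k = res X (interval (k - i) 1 (by omega)) b :=
  (dif_neg (by omega)).trans (dif_pos hkj)

lemma glueSpine_of_ge (hij : i < j) (k : Fin n) (hjk : j ≤ k.1) :
    glueSpine hj a b k = res X (interval (k - (j - i) + 1) 1 (by have := k.isLt; omega)) a :=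
  (dif_neg (by omega)).trans (dif_neg (by omega))

lemma glueSpine_compatible (hij : i < j)
    (hab : res X (interval i 1 (by omega)) a = res X (ends (j - i)) b) (k : ℕ) (hk : k + 1 < n) :
    res X (vert 1 le_rfl) (glueSpine hj a b ⟨k, by omega⟩) =
      res X (vert 0 (Nat.zero_le 1)) (glueSpine hj a b ⟨k + 1, hk⟩) := by
  rcases lt_trichotomy (k + 1) i with hki | rfl | hik
  · rw [glueSpine_of_lt hj a b _ (by simp; omega), glueSpine_of_lt hj a b _ hki]
    exact res_vert_res_eq _ _ _ _ (by rfl) a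
  · rw [glueSpine_of_lt hj a b _ (by simp), glueSpine_of_mem hj a b _ le_rfl (by simp; omega)]
    calc _ = res X (vert 0 (Nat.zero_le 1)) (res X (interval (k + 1) 1 (by omega)) a) :=
          res_vert_res_eq _ _ _ _ (by rfl) a
      _ = res X (vert 0 (Nat.zero_le 1)) (res X (ends (j - (k + 1))) b) := by rw [hab]
      _ = _ := res_vert_res_eq _ _ _ _ (by simp [ends, interval, DFunLike.coe]) b
  rcases lt_trichotomy (k + 1) j with hkj | rfl | hjk
  · rw [glueSpine_of_mem hj a b _ (by simp; omega) (by simp; omega),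
      glueSpine_of_mem hj a b _ (by simp; omega) hkj]
    exact res_vert_res_eq _ _ _ _ (by simp [interval, DFunLike.coe]; omega) b
  · rw [glueSpine_of_mem hj a b _ (by simp; omega) (by simp),
      glueSpine_of_ge hj a b hij _ le_rfl]
    calc _ = res X (vert 1 le_rfl) (res X (ends (k + 1 - i)) b) :=
          res_vert_res_eq _ _ _ _ (by simp [ends, interval, DFunLike.coe]; omega) b
      _ = res X (vert 1 le_rfl) (res X (interval i 1 (by omega)) a) := by rw [hab]
      _ = _ := res_vert_res_eq _ _ _ _ (by simp [interval, DFunLike.coe]; omega) a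
  · rw [glueSpine_of_ge hj a b hij _ (by simp; omega), glueSpine_of_ge hj a b hij _ hjk.le]
    exact res_vert_res_eq _ _ _ _ (by simp [interval, DFunLike.coe]; omega) a

lemma res_interval_eq_glueSpine (hij : i < j) {y : X _⦋n⦌} (hya : res X (outer i j hij hj) y = a)
    (hyb : res X (interval i (j - i) (by omega)) y = b) (k : Fin n) :
    res X (interval k 1 (by have := k.isLt; omega)) y = glueSpine hj a b k := by
  rcases lt_or_ge k.1 i with hki | hik
  · rw [glueSpine_of_lt hj a b k hki, ← hya, res_interval_res_outer_of_lt hij hj y hki]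
  rcases lt_or_ge k.1 j with hkj | hjk
  · rw [glueSpine_of_mem hj a b k hik hkj, ← hyb, res_interval_res_interval k.1 _ _ (by omega)]
  · rw [glueSpine_of_ge hj a b hij k hjk, ← hya,
      res_interval_res_outer_of_gt hij hj y k.1 (by omega) _ (by omega)]

lemma res_inner_eq_of_glueSpine (hij : i < j) (h : IsSegal X) {y : X _⦋n⦌}
    (hy : ∀ k : Fin n, res X (interval k 1 (by have := k.isLt; omega)) y = glueSpine hj a b k) :
    res X (interval i (j - i) (by omega)) y = b := by
  refine h.ext (by omega) fun m hm => ?_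
  rw [res_interval_res_interval (i + m) _ _ rfl, hy ⟨i + m, by omega⟩,
    glueSpine_of_mem hj a b _ (by simp) (by simp; omega)]
  exact res_interval_congr (by simp) _ _ b

lemma res_outer_eq_of_glueSpine (hij : i < j) (h : IsSegal X)
    (hab : res X (interval i 1 (by omega)) a = res X (ends (j - i)) b) {y : X _⦋n⦌}
    (hy : ∀ k : Fin n, res X (interval k 1 (by have := k.isLt; omega)) y = glueSpine hj a b k) :
    res X (outer i j hij hj) y = a := by
  refine h.ext (by omega) fun m hm => ?_
  rcases lt_trichotomy m i with hmi | rfl | hmi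
  · rw [res_interval_res_outer_of_lt hij hj y hmi, hy ⟨m, by omega⟩,
      glueSpine_of_lt hj a b _ hmi]
  · rw [res_interval_res_outer_self, res_inner_eq_of_glueSpine hj a b hij h hy, hab]
  · rw [res_interval_res_outer_of_gt hij hj y _ hmi hm rfl, hy ⟨_, by omega⟩,
      glueSpine_of_ge hj a b hij _ (by simp; omega)]
    exact res_interval_congr (by simp; omega) _ _ a

end Glue

/-- Every Segal simplicial set is 2-Segal. -/
theorem segal_isTwoSegal (X : SSet.{u}) (h : IsSegal X) : IsTwoSegal X := by
  intro n i j hn hij hj a b hab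
  obtain ⟨x, hx, hx_unique⟩ :=
    h n (by omega) (glueSpine hj a b) (glueSpine_compatible hj a b hij hab)
  exact ⟨x, ⟨res_outer_eq_of_glueSpine hj a b hij h hab hx,
    res_inner_eq_of_glueSpine hj a b hij h hx⟩,
    fun y ⟨hya, hyb⟩ => hx_unique y (res_interval_eq_glueSpine hj a b hij hya hyb)⟩

end Seg
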